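/- Let ω = exp(2πi/3) and E₃ the matrix with rows [√3/2, 1/2, 0, 0], [1/2, -√3/2, 0, 0], [0,0,0,1], [0,0,1,0]. If f is a cubic form of the shape a₁(x³ - i y³) + a₃(z³ - i t³) + x²(b₁₂ y + b₁₃ z + b₁₄ t) + y²(i b₁₂ x + i b₁₄ z - i b₁₃ t) + z²(b₃₁ x + b₃₂ y + b₃₄ t) + t²(i b₃₂ x - i b₃₁ y + i b₃₄ z) + c₁ yzt - i c₁ xzt + c₃ xyt - i c₃ xyz, and f∘E₃⁻¹ = ±f, then a₃ = b₃₄ = b₃₁ = b₃₂ = 0, and consequently V(f) is singular at the point (0:0:0:1). -/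

import Mathlib

/-!
Since `E₃` is an involution, `f ∘ E₃ = ε f` with `ε = ±1`. Evaluating at `e₃` and `e₄`, which `E₃`
swaps, gives `-i a₃ = ε a₃`. For a cubic form, the second difference
`f (p + w) + f (p - w) - 2 f p` keeps only the terms quadratic in `w`: in direction `e₃` it is the
coefficient form of `z²`, namely `2 (b₃₁ x + b₃₂ y + b₃₄ t)`, and in direction `e₄` that of `t²`,
namely `2i (b₃₂ x - b₃₁ y + b₃₄ z)`. `E₃` exchanges the two, which yields a linear system in
`b₃₁, b₃₂, b₃₄` with only the zero solution. Once `a₃, b₃₁, b₃₂, b₃₄` vanish, `f` has no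
monomial divisible by `t²`, so it is singular at `(0:0:0:1)`.
-/

open MvPolynomial Matrix Complex

/-- Linear substitution of the variables of `f` by the matrix `A`. -/
noncomputable def substM (A : Matrix (Fin 4) (Fin 4) ℂ)
    (f : MvPolynomial (Fin 4) ℂ) : MvPolynomial (Fin 4) ℂ :=
  MvPolynomial.aeval (fun i => ∑ j : Fin 4, MvPolynomial.C (A i j) * MvPolynomial.X j) f

theorem eval_substM (A : Matrix (Fin 4) (Fin 4) ℂ) (f : MvPolynomial (Fin 4) ℂ)
    (v : Fin 4 → ℂ) : eval v (substM A f) = eval (A *ᵥ v) f := by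
  have h := aeval_bind₁ (R := ℂ) v (fun i => ∑ j, C (A i j) * X j) f
  have hv : A *ᵥ v = fun i => ∑ j, A i j * v j := rfl
  rw [substM, aeval_eq_bind₁, hv]
  simpa using h

theorem exists_eval_mulVec_eq_mul_of_substM_inv {A : Matrix (Fin 4) (Fin 4) ℂ} (hA : A * A = 1)
    {f : MvPolynomial (Fin 4) ℂ} (h : substM A⁻¹ f = f ∨ substM A⁻¹ f = -f) :
    ∃ ε : ℂ, ε ^ 2 = 1 ∧ ∀ v, eval (A *ᵥ v) f = ε * eval v f := by
  rw [inv_eq_left_inv hA] at h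
  rcases h with h | h
  · exact ⟨1, one_pow 2, fun v => by simpa [eval_substM] using congrArg (eval v) h⟩
  · exact ⟨-1, by norm_num, fun v => by simpa [eval_substM] using congrArg (eval v) h⟩

noncomputable def secondDiff {σ R : Type*} [CommRing R] (f : MvPolynomial σ R) (p w : σ → R) : R :=
  eval (p + w) f + eval (p - w) f - 2 * eval p f

theorem secondDiff_mulVec {n R : Type*} [Fintype n] [CommRing R] {A : Matrix n n R}
    {f : MvPolynomial n R} {ε : R} (h : ∀ v, eval (A *ᵥ v) f = ε * eval v f) (p w : n → R) :
    secondDiff f (A *ᵥ p) (A *ᵥ w) = ε * secondDiff f p w := by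
  simp only [secondDiff, ← mulVec_add, ← mulVec_sub, h]
  ring

noncomputable def matE₃ : Matrix (Fin 4) (Fin 4) ℂ :=
  !![(Real.sqrt 3 : ℂ)/2, 1/2, 0, 0;
     1/2, -(Real.sqrt 3 : ℂ)/2, 0, 0;
     0, 0, 0, 1;
     0, 0, 1, 0]

theorem matE₃_mulVec_e₁ : matE₃ *ᵥ ![1, 0, 0, 0] = ![(Real.sqrt 3 : ℂ) / 2, 1 / 2, 0, 0] := by
  ext i; fin_cases i <;> simp [matE₃, mulVec, dotProduct, Fin.sum_univ_four]

theorem matE₃_mulVec_e₃ : matE₃ *ᵥ ![0, 0, 1, 0] = ![0, 0, 0, 1] := by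
  ext i; fin_cases i <;> simp [matE₃, mulVec, dotProduct, Fin.sum_univ_four]

theorem matE₃_mulVec_e₄ : matE₃ *ᵥ ![0, 0, 0, 1] = ![0, 0, 1, 0] := by
  ext i; fin_cases i <;> simp [matE₃, mulVec, dotProduct, Fin.sum_univ_four]

theorem matE₃_mul_self : matE₃ * matE₃ = 1 := by
  have hs : (Real.sqrt 3 : ℂ) ^ 2 = 3 := by norm_cast; simp
  ext i j
  fin_cases i <;> fin_cases j <;> simp [matE₃, mul_apply, Fin.sum_univ_four, one_apply] <;>
    ring_nf <;> simp only [hs] <;> norm_num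

noncomputable def cubicForm (a₁ a₃ b₁₂ b₁₃ b₁₄ b₃₁ b₃₂ b₃₄ c₁ c₃ : ℂ) : MvPolynomial (Fin 4) ℂ :=
  C a₁ * (X 0 ^ 3 - C I * X 1 ^ 3) + C a₃ * (X 2 ^ 3 - C I * X 3 ^ 3) +
  X 0 ^ 2 * (C b₁₂ * X 1 + C b₁₃ * X 2 + C b₁₄ * X 3) +
  X 1 ^ 2 * (C (I * b₁₂) * X 0 + C (I * b₁₄) * X 2 - C (I * b₁₃) * X 3) +
  X 2 ^ 2 * (C b₃₁ * X 0 + C b₃₂ * X 1 + C b₃₄ * X 3) +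
  X 3 ^ 2 * (C (I * b₃₂) * X 0 - C (I * b₃₁) * X 1 + C (I * b₃₄) * X 2) +
  C c₁ * (X 1 * X 2 * X 3) - C (I * c₁) * (X 0 * X 2 * X 3) +
  C c₃ * (X 0 * X 1 * X 3) - C (I * c₃) * (X 0 * X 1 * X 2)

def IsSingularPoint {σ R : Type*} [CommSemiring R] (f : MvPolynomial σ R) (p : σ → R) : Prop :=
  eval p f = 0 ∧ ∀ i, eval p (pderiv i f) = 0

section CubicForm

variable (a₁ a₃ b₁₂ b₁₃ b₁₄ b₃₁ b₃₂ b₃₄ c₁ c₃ : ℂ)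

local notation "F" => cubicForm a₁ a₃ b₁₂ b₁₃ b₁₄ b₃₁ b₃₂ b₃₄ c₁ c₃

theorem eval_cubicForm_e₃ : eval ![0, 0, 1, 0] F = a₃ := by
  simp [cubicForm]

theorem eval_cubicForm_e₄ : eval ![0, 0, 0, 1] F = -I * a₃ := by
  simp [cubicForm, mul_comm]

theorem secondDiff_cubicForm_e₃ (x y t : ℂ) :
    secondDiff F ![x, y, 0, t] ![0, 0, 1, 0] = 2 * (b₃₁ * x + b₃₂ * y + b₃₄ * t) := by
  simp [secondDiff, cubicForm]
  ring

theorem secondDiff_cubicForm_e₄ (x y z : ℂ) :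
    secondDiff F ![x, y, z, 0] ![0, 0, 0, 1] = 2 * I * (b₃₂ * x - b₃₁ * y + b₃₄ * z) := by
  simp [secondDiff, cubicForm]
  ring

theorem isSingularPoint_cubicForm_e₄ :
    IsSingularPoint (cubicForm a₁ 0 b₁₂ b₁₃ b₁₄ 0 0 0 c₁ c₃) ![0, 0, 0, 1] := by
  refine ⟨by simp [cubicForm], fun i => ?_⟩
  fin_cases i <;> simp [cubicForm, pderiv_X]

variable {a₁ a₃ b₁₂ b₁₃ b₁₄ b₃₁ b₃₂ b₃₄ c₁ c₃}

theorem cubicForm_coeffs_eq_zero {ε : ℂ} (hε : ε ^ 2 = 1)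
    (h : ∀ v, eval (matE₃ *ᵥ v) F = ε * eval v F) :
    a₃ = 0 ∧ b₃₄ = 0 ∧ b₃₁ = 0 ∧ b₃₂ = 0 := by
  have hs : (Real.sqrt 3 : ℂ) ^ 2 = 3 := by norm_cast; simp
  have ha := h ![0, 0, 1, 0]
  rw [matE₃_mulVec_e₃, eval_cubicForm_e₃, eval_cubicForm_e₄] at ha
  have hb := secondDiff_mulVec h ![0, 0, 1, 0] ![0, 0, 0, 1]
  rw [matE₃_mulVec_e₃, matE₃_mulVec_e₄, secondDiff_cubicForm_e₃, secondDiff_cubicForm_e₄] at hb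
  have h₁ := secondDiff_mulVec h ![1, 0, 0, 0] ![0, 0, 1, 0]
  rw [matE₃_mulVec_e₁, matE₃_mulVec_e₃, secondDiff_cubicForm_e₃, secondDiff_cubicForm_e₄] at h₁
  have h₂ := secondDiff_mulVec h ![1, 0, 0, 0] ![0, 0, 0, 1]
  rw [matE₃_mulVec_e₁, matE₃_mulVec_e₄, secondDiff_cubicForm_e₃, secondDiff_cubicForm_e₄] at h₂
  -- `h₁`, `h₂` form a linear system in `b₃₁, b₃₂` of determinant `-4ε ≠ 0`.
  have hb₃₂ : b₃₂ = 0 := by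
    linear_combination (ε / 4 * (Real.sqrt 3 : ℂ)) * h₁ + (ε / 4 * (I + 2 * ε)) * h₂
      - (ε * I / 4 * b₃₂) * hs + ((ε * I - 1) * b₃₂) * hε + (ε ^ 2 / 2 * b₃₂) * I_sq
  refine ⟨?_, ?_, ?_, hb₃₂⟩
  · linear_combination (I - ε) / 2 * ha - a₃ / 2 * hε + a₃ / 2 * I_sq
  · linear_combination (1 + ε * I) / 4 * hb + (b₃₄ * ε ^ 2 / 2) * I_sq - b₃₄ / 2 * hε
  · linear_combination (Real.sqrt 3 / 3 : ℂ) * h₂ - (Real.sqrt 3 / 3 * (1 - 2 * ε * I) : ℂ) * hb₃₂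
      - b₃₁ / 3 * hs

end CubicForm

theorem stmt18 (a₁ a₃ b₁₂ b₁₃ b₁₄ b₃₁ b₃₂ b₃₄ c₁ c₃ : ℂ)
    (f : MvPolynomial (Fin 4) ℂ)
    (hf : f =
      MvPolynomial.C a₁ * (MvPolynomial.X 0 ^ 3 - MvPolynomial.C Complex.I * MvPolynomial.X 1 ^ 3) +
      MvPolynomial.C a₃ * (MvPolynomial.X 2 ^ 3 - MvPolynomial.C Complex.I * MvPolynomial.X 3 ^ 3) +
      MvPolynomial.X 0 ^ 2 * (MvPolynomial.C b₁₂ * MvPolynomial.X 1 +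
        MvPolynomial.C b₁₃ * MvPolynomial.X 2 + MvPolynomial.C b₁₄ * MvPolynomial.X 3) +
      MvPolynomial.X 1 ^ 2 * (MvPolynomial.C (Complex.I * b₁₂) * MvPolynomial.X 0 +
        MvPolynomial.C (Complex.I * b₁₄) * MvPolynomial.X 2 -
        MvPolynomial.C (Complex.I * b₁₃) * MvPolynomial.X 3) +
      MvPolynomial.X 2 ^ 2 * (MvPolynomial.C b₃₁ * MvPolynomial.X 0 +
        MvPolynomial.C b₃₂ * MvPolynomial.X 1 + MvPolynomial.C b₃₄ * MvPolynomial.X 3) +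
      MvPolynomial.X 3 ^ 2 * (MvPolynomial.C (Complex.I * b₃₂) * MvPolynomial.X 0 -
        MvPolynomial.C (Complex.I * b₃₁) * MvPolynomial.X 1 +
        MvPolynomial.C (Complex.I * b₃₄) * MvPolynomial.X 2) +
      MvPolynomial.C c₁ * (MvPolynomial.X 1 * MvPolynomial.X 2 * MvPolynomial.X 3) -
      MvPolynomial.C (Complex.I * c₁) * (MvPolynomial.X 0 * MvPolynomial.X 2 * MvPolynomial.X 3) +
      MvPolynomial.C c₃ * (MvPolynomial.X 0 * MvPolynomial.X 1 * MvPolynomial.X 3) -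
      MvPolynomial.C (Complex.I * c₃) * (MvPolynomial.X 0 * MvPolynomial.X 1 * MvPolynomial.X 2))
    (E₃ : Matrix (Fin 4) (Fin 4) ℂ)
    (hE₃ : E₃ = !![(Real.sqrt 3 : ℂ)/2, 1/2, 0, 0;
                   1/2, -(Real.sqrt 3 : ℂ)/2, 0, 0;
                   0, 0, 0, 1;
                   0, 0, 1, 0])
    (hinv : substM E₃⁻¹ f = f ∨ substM E₃⁻¹ f = -f) :
    a₃ = 0 ∧ b₃₄ = 0 ∧ b₃₁ = 0 ∧ b₃₂ = 0 ∧
      (MvPolynomial.eval ![0, 0, 0, 1] f = 0 ∧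
        ∀ i : Fin 4, MvPolynomial.eval ![0, 0, 0, 1] (MvPolynomial.pderiv i f) = 0) := by
  have hF : f = cubicForm a₁ a₃ b₁₂ b₁₃ b₁₄ b₃₁ b₃₂ b₃₄ c₁ c₃ := hf
  have hE : E₃ = matE₃ := hE₃
  subst hF hE
  obtain ⟨ε, hε, h⟩ := exists_eval_mulVec_eq_mul_of_substM_inv matE₃_mul_self hinv
  obtain ⟨rfl, rfl, rfl, rfl⟩ := cubicForm_coeffs_eq_zero hε h
  exact ⟨rfl, rfl, rfl, rfl, isSingularPoint_cubicForm_e₄ a₁ b₁₂ b₁₃ b₁₄ c₁ c₃⟩
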